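/- Let L, A : [0,∞) → ℝ be differentiable with A constant, L > 0, and L'(t) = L(t) − 2πα(t) where α(t) = (1/L(t)) I(t) and I(t) ≥ (L(t)² − 2πA)/π for all t. Then the deficit D(t) = L(t)² − 4πA satisfies D'(t) ≤ −2D(t). -/
import Mathlib


open Real

/-- If `A` is constant, `L > 0` is differentiable with `L' = L − 2πα`,
`α = I/L`, and `I ≥ (L² − 2πA)/π`, then the isoperimetric deficit
`D = L² − 4πA` satisfies `D' ≤ −2D`. -/
theorem stmt_5 (L I : ℝ → ℝ) (A : ℝ)
    (hdiff : Differentiable ℝ L)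
    (hLpos : ∀ t, 0 < L t)
    (hode : ∀ t ≥ (0:ℝ), deriv L t = L t - 2 * Real.pi * (I t / L t))
    (hI : ∀ t ≥ (0:ℝ), I t ≥ (L t ^ 2 - 2 * Real.pi * A) / Real.pi) :
    ∀ t ≥ (0:ℝ),
      deriv (fun s => L s ^ 2 - 4 * Real.pi * A) t
        ≤ -2 * (L t ^ 2 - 4 * Real.pi * A) := by
  intro t ht
  have hL := hLpos t
  have hpi := Real.pi_pos
  have hd : deriv (fun s => L s ^ 2 - 4 * Real.pi * A) t
      = 2 * L t * deriv L t := by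
    have h1 : HasDerivAt (fun s => L s ^ 2 - 4 * Real.pi * A)
        (2 * L t ^ 1 * deriv L t - 0) t := by
      exact ((hdiff t).hasDerivAt.pow 2).sub_const _ |>.congr_deriv (by ring)
    have := h1.deriv
    simpa using this
  rw [hd, hode t ht]
  have hIb := hI t ht
  -- I t ≥ (L t ^2 - 2πA)/π  ⇒  2π (I t / L t) ≥ 2 (L t^2 - 2πA)/L t
  have key : I t / L t ≥ (L t ^ 2 - 2 * Real.pi * A) / Real.pi / L t :=
    div_le_div_of_nonneg_right hIb hL.le
  have : 2 * L t * (L t - 2 * Real.pi * (I t / L t))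
      ≤ 2 * L t * (L t - 2 * Real.pi * ((L t ^ 2 - 2 * Real.pi * A) / Real.pi / L t)) := by
    apply mul_le_mul_of_nonneg_left _ (by positivity)
    have : 2 * Real.pi * ((L t ^ 2 - 2 * Real.pi * A) / Real.pi / L t)
        ≤ 2 * Real.pi * (I t / L t) :=
      mul_le_mul_of_nonneg_left key (by positivity)
    linarith
  refine this.trans ?_
  have h774 : 2 * L t * (L t - 2 * Real.pi * ((L t ^ 2 - 2 * Real.pi * A) / Real.pi / L t))
      = -2 * (L t ^ 2 - 4 * Real.pi * A) := by
    field_simp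
    ring
  rw [h774]
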